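/- arXiv:2402.01198 — 3 statements merged into one kernel-verified Lean document; each statement's English description precedes it below -/
import Mathlib

section
/- For every odd integer N = 2n+1 and every real t with 0 < |t| ≤ 1/2, the second derivative of the normalized Dirichlet kernel satisfies |D_N''(t)| ≤ 5 N |t|^{-1}. -/
open scoped Real BigOperators
open Matrix

noncomputable section

/-- Normalized Dirichlet kernel of order `N = 2n+1`:
`D_N(t) = (1/N) ∑_{k=-n}^{n} e^{-2πi k t}`. -/
def dirichletKer (n : ℕ) (t : ℝ) : ℂ :=
  (1 / (2 * (n : ℂ) + 1)) * ∑ k ∈ Finset.Icc (-(n : ℤ)) (n : ℤ),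
    Complex.exp (-(2 * (Real.pi : ℂ) * Complex.I * (k : ℂ) * (t : ℂ)))

/-- `v₀(τ) ∈ ℂ^N`, entries `(1/√N) e^{2πi k τ}`, `k = -n, …, n`. -/
def v0 (n : ℕ) (τ : ℝ) : Fin (2 * n + 1) → ℂ := fun i =>
  ((1 / Real.sqrt (2 * n + 1) : ℝ) : ℂ) *
    Complex.exp (2 * (Real.pi : ℂ) * Complex.I * (((i : ℤ) - (n : ℤ) : ℤ) : ℂ) * (τ : ℂ))

/-- `v₁(τ) ∈ ℂ^N`, entries `(1/√N)(2πi k) e^{2πi k τ}`, `k = -n, …, n`. -/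
def v1 (n : ℕ) (τ : ℝ) : Fin (2 * n + 1) → ℂ := fun i =>
  ((1 / Real.sqrt (2 * n + 1) : ℝ) : ℂ) *
    (2 * (Real.pi : ℂ) * Complex.I * (((i : ℤ) - (n : ℤ) : ℤ) : ℂ)) *
    Complex.exp (2 * (Real.pi : ℂ) * Complex.I * (((i : ℤ) - (n : ℤ) : ℤ) : ℂ) * (τ : ℂ))

/-- `V₀(τ) ∈ ℂ^{N×L}` with columns `v₀(τ₁), …, v₀(τ_L)`. -/
def V0mat (n : ℕ) {L : ℕ} (τ : Fin L → ℝ) : Matrix (Fin (2 * n + 1)) (Fin L) ℂ :=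
  Matrix.of fun i j => v0 n (τ j) i

/-- `V₁(τ) ∈ ℂ^{N×L}` with columns `v₁(τ₁), …, v₁(τ_L)`. -/
def V1mat (n : ℕ) {L : ℕ} (τ : Fin L → ℝ) : Matrix (Fin (2 * n + 1)) (Fin L) ℂ :=
  Matrix.of fun i j => v1 n (τ j) i

/-- Wrap-around distance `inf_{j ∈ ℤ} |s - t + j|`. -/
def wrapDist (s t : ℝ) : ℝ := ⨅ j : ℤ, |s - t + (j : ℝ)|

/-- Minimal wrap-around separation between distinct entries of `τ`. -/
def minSep {L : ℕ} (τ : Fin L → ℝ) : ℝ :=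
  ⨅ q : {q : Fin L × Fin L // q.1 ≠ q.2}, wrapDist (τ q.val.1) (τ q.val.2)

/-- `G_p ∈ ℂ^{L×L}` with entries
`D_N^{(p)}(τ_i - τ_j) - D_N^{(p)}(τ̃_i - τ_j) + D_N^{(p)}(τ̃_i - τ̃_j) - D_N^{(p)}(τ_i - τ̃_j)`. -/
def Gmat (n p : ℕ) {L : ℕ} (τ τ' : Fin L → ℝ) : Matrix (Fin L) (Fin L) ℂ :=
  Matrix.of fun i j =>
    iteratedDeriv p (dirichletKer n) (τ i - τ j) -
    iteratedDeriv p (dirichletKer n) (τ' i - τ j) +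
    iteratedDeriv p (dirichletKer n) (τ' i - τ' j) -
    iteratedDeriv p (dirichletKer n) (τ i - τ' j)

/-!
Differentiating termwise, `D_N''(t) = -(8π²/N) S_n(t)` with `S_n(t) = ∑_{k ≤ n} k² cos(2πkt)`,
so, as `π²/2 < 5`, it suffices to show `16 |t| |S_n(t)| ≤ N²`. For `|t| ≲ 1/n` this follows from
the trivial bound `|S_n| ≤ ∑ k²`. Otherwise, summation by parts gives the closed form
`4 sin³(πt) S_n(t) = X sin(2πnt) + Y cos(2πnt)` with `X, Y` polynomial in `n`, `sin(πt)` and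
`cos(πt)`, hence `16 sin⁶(πt) S_n(t)² ≤ X² + Y²`; the remaining polynomial inequality follows from
`sin(πt) ≥ 2|t|`, sharpened to `sin(πt) ≥ 2.7|t|` for `|t| ≤ 1/4`.
-/

open Finset Real

def sqCosSum (n : ℕ) (t : ℝ) : ℝ :=
  ∑ k ∈ range (n + 1), (k : ℝ) ^ 2 * cos (2 * π * k * t)

lemma sqCosSum_succ (n : ℕ) (t : ℝ) :
    sqCosSum (n + 1) t
      = sqCosSum n t + ((n : ℝ) + 1) ^ 2 * cos (2 * π * ((n : ℝ) + 1) * t) := by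
  rw [sqCosSum, sum_range_succ]
  push_cast
  rfl

lemma sqCosSum_neg (n : ℕ) (t : ℝ) : sqCosSum n (-t) = sqCosSum n t := by
  simp only [sqCosSum, mul_neg, cos_neg]

lemma sqCosSum_abs (n : ℕ) (t : ℝ) : sqCosSum n |t| = sqCosSum n t := by
  rcases abs_choice t with h | h <;> rw [h]
  exact sqCosSum_neg n t

lemma sum_range_sq_eq (n : ℕ) :
    ∑ k ∈ range (n + 1), (k : ℝ) ^ 2 = n * (n + 1) * (2 * n + 1) / 6 := by
  induction n with
  | zero => simp
  | succ m ih => rw [sum_range_succ, ih]; push_cast; ring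

lemma abs_sqCosSum_le (n : ℕ) (t : ℝ) :
    |sqCosSum n t| ≤ n * (n + 1) * (2 * n + 1) / 6 := by
  calc |sqCosSum n t| ≤ ∑ k ∈ range (n + 1), |(k : ℝ) ^ 2 * cos (2 * π * k * t)| :=
        abs_sum_le_sum_abs _ _
    _ ≤ ∑ k ∈ range (n + 1), (k : ℝ) ^ 2 := by
        gcongr with k
        rw [abs_mul, abs_of_nonneg (by positivity)]
        exact mul_le_of_le_one_right (by positivity) (abs_cos_le_one _)
    _ = n * (n + 1) * (2 * n + 1) / 6 := sum_range_sq_eq n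

lemma four_mul_sin_pow_three_mul_sqCosSum (n : ℕ) (t : ℝ) :
    4 * sin (π * t) ^ 3 * sqCosSum n t
      = cos (π * t) * (2 * n ^ 2 * sin (π * t) ^ 2 - 1) * sin (2 * π * n * t)
        + 2 * sin (π * t) * (n ^ 2 * sin (π * t) ^ 2 + n) * cos (2 * π * n * t) := by
  induction n with
  | zero => simp [sqCosSum]
  | succ m ih =>
    have harg : 2 * π * ((m : ℝ) + 1) * t = 2 * π * m * t + 2 * (π * t) := by ring
    push_cast
    rw [sqCosSum_succ, harg, sin_add, cos_add, sin_two_mul, cos_two_mul]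
    set s := sin (π * t)
    set c := cos (π * t)
    set P := sin (2 * π * m * t)
    set Q := cos (2 * π * m * t)
    linear_combination ih + (2 * c * P - 2 * s * Q - 4 * s * Q * m - 4 * s ^ 2 * c * P
      - 8 * s ^ 2 * c * P * m - 4 * s ^ 2 * c * P * m ^ 2) * sin_sq_add_cos_sq (π * t)

/-- `X² + Y²` for the coefficients `X, Y` of the closed form above, in terms of
`x = n` and `σ = sin²(πt)`. -/
def sqCosEnvelope (x σ : ℝ) : ℝ :=
  (1 - σ) * (2 * x ^ 2 * σ - 1) ^ 2 + 4 * σ * (x ^ 2 * σ + x) ^ 2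

lemma sqCosEnvelope_nonneg {x σ : ℝ} (hσ0 : 0 ≤ σ) (hσ1 : σ ≤ 1) : 0 ≤ sqCosEnvelope x σ := by
  have := sub_nonneg.2 hσ1
  unfold sqCosEnvelope
  positivity

lemma sixteen_mul_sin_pow_six_mul_sqCosSum_sq_le (n : ℕ) (t : ℝ) :
    16 * sin (π * t) ^ 6 * sqCosSum n t ^ 2 ≤ sqCosEnvelope n (sin (π * t) ^ 2) := by
  have hI := four_mul_sin_pow_three_mul_sqCosSum n t
  set s := sin (π * t)
  set P := sin (2 * π * n * t)
  set Q := cos (2 * π * n * t)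
  set X := cos (π * t) * (2 * (n : ℝ) ^ 2 * s ^ 2 - 1)
  set Y := 2 * s * ((n : ℝ) ^ 2 * s ^ 2 + n)
  calc 16 * s ^ 6 * sqCosSum n t ^ 2 = (X * P + Y * Q) ^ 2 := by rw [← hI]; ring
    _ ≤ X ^ 2 + Y ^ 2 := by
        nlinarith [sq_nonneg (X * Q - Y * P), sin_sq_add_cos_sq (2 * π * n * t)]
    _ = sqCosEnvelope n (s ^ 2) := by
        simp only [X, Y, sqCosEnvelope]
        linear_combination (2 * (n : ℝ) ^ 2 * s ^ 2 - 1) ^ 2 * cos_sq' (π * t)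

lemma sqCosEnvelope_le_of_half_le {x σ : ℝ} (hx : 1 ≤ x) (hσ : 1 / 2 ≤ σ) :
    4 * sqCosEnvelope x σ ≤ σ ^ 2 * (2 * x + 1) ^ 4 := by
  unfold sqCosEnvelope
  nlinarith [sq_nonneg (x - 1), sq_nonneg (σ - 1), sq_nonneg (2 * σ - 1),
    sq_nonneg (x * σ - 1), sq_nonneg (x * σ - x), sq_nonneg x,
    mul_pos (lt_of_lt_of_le one_pos hx) (lt_of_lt_of_le (by norm_num) hσ)]

lemma sqCosEnvelope_le_of_four_le {x σ : ℝ} (hx : 1 ≤ x) (hσ : 4 ≤ σ * (x + 1) ^ 2)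
    (hσ1 : σ ≤ 1) : 2.2 * sqCosEnvelope x σ ≤ σ ^ 2 * (2 * x + 1) ^ 4 := by
  unfold sqCosEnvelope
  nlinarith [sq_nonneg (x - 1), sq_nonneg (σ - 1), sq_nonneg (x * σ - 1),
    mul_nonneg (sub_nonneg.2 hσ1) (sq_nonneg (x + 1)), sq_nonneg (σ * (x + 1) ^ 2 - 4),
    mul_pos (lt_of_lt_of_le one_pos hx) (lt_of_lt_of_le one_pos hx)]

lemma two_mul_le_sin_pi_mul {τ : ℝ} (h0 : 0 ≤ τ) (h : τ ≤ 1 / 2) : 2 * τ ≤ sin (π * τ) :=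
  calc 2 * τ = 2 / π * (π * τ) := by field_simp
    _ ≤ sin (π * τ) := mul_le_sin (by positivity) (by nlinarith [pi_pos])

lemma mul_le_sin_pi_mul_of_le_quarter {τ : ℝ} (h0 : 0 < τ) (h : τ ≤ 1 / 4) :
    2.7 * τ ≤ sin (π * τ) := by
  have hcube := sin_gt_sub_cube (x := π * τ) (by positivity)
  have hπτ : π * τ ≤ 0.79 := by nlinarith [pi_lt_d2]
  have : (π * τ) ^ 3 ≤ 0.79 ^ 2 * (π * τ) := by
    have := mul_le_mul_of_nonneg_left (pow_le_pow_left₀ (by positivity) hπτ 2)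
      (by positivity : 0 ≤ π * τ)
    nlinarith
  nlinarith [pi_gt_d2]

lemma half_le_sin_sq_pi_mul {τ : ℝ} (h0 : 1 / 4 < τ) (h : τ ≤ 1 / 2) :
    1 / 2 ≤ sin (π * τ) ^ 2 := by
  have hmono : sin (π / 4) < sin (π * τ) :=
    sin_lt_sin_of_lt_of_le_pi_div_two (by nlinarith [pi_pos]) (by nlinarith [pi_pos])
      (by nlinarith [pi_pos])
  rw [sin_pi_div_four] at hmono
  nlinarith [sq_sqrt (by norm_num : (0 : ℝ) ≤ 2), sqrt_nonneg 2]

lemma sixteen_sq_mul_sqCosEnvelope_le {x τ : ℝ} (hx : 1 ≤ x) (h0 : 0 < τ) (h : τ ≤ 1 / 2)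
    (hτ : 3 * (2 * x + 1) < 8 * x * (x + 1) * τ) :
    16 * τ ^ 2 * sqCosEnvelope x (sin (π * τ) ^ 2) ≤ sin (π * τ) ^ 6 * (2 * x + 1) ^ 4 := by
  have hs := two_mul_le_sin_pi_mul h0.le h
  set s := sin (π * τ)
  obtain ⟨C, hC, hτs⟩ : ∃ C, C * sqCosEnvelope x (s ^ 2) ≤ (s ^ 2) ^ 2 * (2 * x + 1) ^ 4 ∧
      16 * τ ^ 2 ≤ C * s ^ 2 := by
    rcases le_or_gt τ (1 / 4) with hq | hq
    · have hs' := mul_le_sin_pi_mul_of_le_quarter h0 hq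
      have hxτ : 3 / 4 < (x + 1) * τ := by nlinarith
      have hsx : 2 < s * (x + 1) := by nlinarith
      exact ⟨2.2, sqCosEnvelope_le_of_four_le hx (by nlinarith) (sin_sq_le_one _), by nlinarith⟩
    · exact ⟨4, sqCosEnvelope_le_of_half_le hx (half_le_sin_sq_pi_mul hq h), by nlinarith⟩
  calc 16 * τ ^ 2 * sqCosEnvelope x (s ^ 2) ≤ C * s ^ 2 * sqCosEnvelope x (s ^ 2) :=
        mul_le_mul_of_nonneg_right hτs (sqCosEnvelope_nonneg (sq_nonneg s) (sin_sq_le_one _))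
    _ = s ^ 2 * (C * sqCosEnvelope x (s ^ 2)) := by ring
    _ ≤ s ^ 2 * ((s ^ 2) ^ 2 * (2 * x + 1) ^ 4) := by gcongr
    _ = s ^ 6 * (2 * x + 1) ^ 4 := by ring

lemma sixteen_mul_abs_sqCosSum_le (n : ℕ) {τ : ℝ} (h0 : 0 < τ) (h : τ ≤ 1 / 2) :
    16 * τ * |sqCosSum n τ| ≤ (2 * n + 1) ^ 2 := by
  rcases le_or_gt (8 * n * (n + 1) * τ) (3 * (2 * n + 1)) with hτ | hτ
  · have := mul_le_mul_of_nonneg_left (abs_sqCosSum_le n τ) (by positivity : (0 : ℝ) ≤ 16 * τ)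
    nlinarith [mul_le_mul_of_nonneg_right hτ (by positivity : (0 : ℝ) ≤ 2 * n + 1)]
  have hn : (1 : ℝ) ≤ n := by
    rcases n with _ | n
    · norm_num at hτ
    · simp
  have hs : 0 < sin (π * τ) := by linarith [two_mul_le_sin_pi_mul h0.le h]
  have hsq : (16 * τ * |sqCosSum n τ|) ^ 2 ≤ ((2 * n + 1) ^ 2) ^ 2 := by
    refine le_of_mul_le_mul_right ?_ (pow_pos hs 6)
    calc (16 * τ * |sqCosSum n τ|) ^ 2 * sin (π * τ) ^ 6
        = 16 * τ ^ 2 * (16 * sin (π * τ) ^ 6 * sqCosSum n τ ^ 2) := by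
          rw [mul_pow, sq_abs]; ring
      _ ≤ 16 * τ ^ 2 * sqCosEnvelope n (sin (π * τ) ^ 2) := by
          gcongr; exact sixteen_mul_sin_pow_six_mul_sqCosSum_sq_le n τ
      _ ≤ sin (π * τ) ^ 6 * (2 * n + 1) ^ 4 := sixteen_sq_mul_sqCosEnvelope_le hn h0 h hτ
      _ = ((2 * n + 1) ^ 2) ^ 2 * sin (π * τ) ^ 6 := by ring
  exact le_of_pow_le_pow_left₀ two_ne_zero (by positivity) hsq

lemma iteratedDeriv_cexp_const_mul_ofReal (m : ℕ) (c : ℂ) :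
    iteratedDeriv m (fun x : ℝ => Complex.exp (c * x))
      = fun x : ℝ => c ^ m * Complex.exp (c * x) := by
  induction m with
  | zero => simp
  | succ m ih =>
    rw [iteratedDeriv_succ, ih]
    funext x
    have h := ((hasDerivAt_id (x : ℂ)).const_mul c).cexp.comp_ofReal.const_mul (c ^ m)
    simpa [pow_succ, mul_assoc, mul_comm, mul_left_comm] using h.deriv

lemma iteratedDeriv_dirichletKer (n m : ℕ) (t : ℝ) :
    iteratedDeriv m (dirichletKer n) t = 1 / (2 * (n : ℂ) + 1) *
      ∑ k ∈ Icc (-(n : ℤ)) n, (-(2 * π * Complex.I * k)) ^ m *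
        Complex.exp (-(2 * π * Complex.I * k) * t) := by
  have hD : dirichletKer n = fun x : ℝ => 1 / (2 * (n : ℂ) + 1) *
      ∑ k ∈ Icc (-(n : ℤ)) n, Complex.exp (-(2 * π * Complex.I * k) * x) := by
    funext x
    simp only [dirichletKer, neg_mul]
  rw [hD, iteratedDeriv_const_mul_field, iteratedDeriv_fun_sum fun k _ => ?_]
  · simp only [iteratedDeriv_cexp_const_mul_ofReal]
  · exact (contDiff_const.mul Complex.ofRealCLM.contDiff).cexp.contDiffAt

lemma sum_Icc_neg_natCast_succ {M : Type*} [AddCommMonoid M] (f : ℤ → M) (n : ℕ) :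
    ∑ k ∈ Icc (-((n + 1 : ℕ) : ℤ)) (n + 1 : ℕ), f k
      = f (-((n : ℤ) + 1)) + f ((n : ℤ) + 1) + ∑ k ∈ Icc (-(n : ℤ)) n, f k := by
  have hIcc : Icc (-((n + 1 : ℕ) : ℤ)) (n + 1 : ℕ)
      = insert (-((n : ℤ) + 1)) (insert ((n : ℤ) + 1) (Icc (-(n : ℤ)) n)) := by
    ext k; simp only [mem_Icc, mem_insert]; omega
  rw [hIcc, sum_insert (by simp only [mem_insert, mem_Icc]; omega),
    sum_insert (by simp only [mem_Icc]; omega), add_assoc]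

lemma sum_Icc_sq_mul_cexp (n : ℕ) (t : ℝ) :
    ∑ k ∈ Icc (-(n : ℤ)) n, (k : ℂ) ^ 2 * Complex.exp (-(2 * π * Complex.I * k * t))
      = 2 * sqCosSum n t := by
  induction n with
  | zero => simp [sqCosSum]
  | succ m ih =>
    rw [sum_Icc_neg_natCast_succ, ih, sqCosSum_succ]
    have h := Complex.two_cos (2 * π * ((m : ℂ) + 1) * t)
    push_cast
    rw [show -(2 * π * Complex.I * (-((m : ℂ) + 1)) * t)
        = 2 * π * ((m : ℂ) + 1) * t * Complex.I by ring,
      show -(2 * π * Complex.I * ((m : ℂ) + 1) * t)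
        = -(2 * π * ((m : ℂ) + 1) * t) * Complex.I by ring]
    linear_combination -((m : ℂ) + 1) ^ 2 * h

lemma iteratedDeriv_two_dirichletKer (n : ℕ) (t : ℝ) :
    iteratedDeriv 2 (dirichletKer n) t
      = ((-8 * π ^ 2 * sqCosSum n t / (2 * n + 1) : ℝ) : ℂ) := by
  have hterm : ∀ k : ℤ, (-(2 * π * Complex.I * k)) ^ 2 *
        Complex.exp (-(2 * π * Complex.I * k) * t)
      = -4 * π ^ 2 * ((k : ℂ) ^ 2 * Complex.exp (-(2 * π * Complex.I * k * t))) := by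
    intro k
    rw [neg_mul]
    linear_combination
      (4 * π ^ 2 * k ^ 2 * Complex.exp (-(2 * π * Complex.I * k * t))) * Complex.I_sq
  rw [iteratedDeriv_dirichletKer, sum_congr rfl fun k _ => hterm k, ← mul_sum,
    sum_Icc_sq_mul_cexp]
  push_cast
  ring

/-- `|D_N''(t)| ≤ 5 N |t|⁻¹` for `0 < |t| ≤ 1/2`, `N = 2n+1`. -/
theorem dirichlet_deriv2_bound (n : ℕ) (t : ℝ) (ht0 : 0 < |t|) (ht : |t| ≤ 1 / 2) :
    ‖iteratedDeriv 2 (dirichletKer n) t‖ ≤ 5 * (2 * (n : ℝ) + 1) * |t|⁻¹ := by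
  rw [iteratedDeriv_two_dirichletKer, Complex.norm_real, Real.norm_eq_abs, abs_div, abs_mul,
    abs_of_pos (by positivity : (0 : ℝ) < 2 * n + 1), div_le_iff₀ (by positivity),
    ← div_eq_mul_inv, div_mul_eq_mul_div, le_div_iff₀ ht0]
  have hS := sixteen_mul_abs_sqCosSum_le n ht0 ht
  rw [sqCosSum_abs] at hS
  have hπ : π ^ 2 < 10 := by nlinarith [pi_lt_d2, pi_pos]
  calc |-8 * π ^ 2| * |sqCosSum n t| * |t| = π ^ 2 / 2 * (16 * |t| * |sqCosSum n t|) := by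
        rw [abs_mul, abs_neg, abs_of_pos (by positivity : (0 : ℝ) < 8),
          abs_of_nonneg (sq_nonneg π)]
        ring
    _ ≤ 10 / 2 * (2 * n + 1) ^ 2 := by gcongr
    _ = 5 * (2 * n + 1) * (2 * n + 1) := by ring
end
end

section
/- Let N = 2n+1 be odd, let τ = (τ_1,…,τ_L) and τ̃ = (τ̃_1,…,τ̃_L) be lists of reals, let δ ≥ 0, and assume the wrap-around distance between τ_ℓ and τ̃_ℓ is at most δ for every ℓ ∈ {1,…,L}. Then for each p ∈ {0,1,2} and all indices i, j, the entries of G_p satisfy |G_p(i,j)| ≤ 4 δ² · sup_{|ε| ≤ 2δ} |D_N^{(p+2)}(τ_i − τ_j + ε)|. -/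
open scoped Real BigOperators
open Matrix

noncomputable section

/-! Since `D_N` is 1-periodic, shifting the arguments by integers turns the entry into a second
difference `f (x + a + b) - f (x + a) - f (x + b) + f x` of `f = D_N^{(p)}` at `x = τ_i - τ_j`,
with `|a|, |b| ≤ δ`. Two applications of the mean value theorem bound it by
`|a| |b| sup_{|u| ≤ |a| + |b|} ‖f'' (x + u)‖ ≤ δ² sup_{|ε| ≤ 2δ} ‖D_N^{(p+2)} (x + ε)‖`. -/

theorem Function.Periodic.iteratedDeriv {𝕜 F : Type*} [NontriviallyNormedField 𝕜]
    [NormedAddCommGroup F] [NormedSpace 𝕜 F] {f : 𝕜 → F} {c : 𝕜} (h : Function.Periodic f c)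
    (k : ℕ) : Function.Periodic (iteratedDeriv k f) c := fun x => by
  have := congrFun (iteratedDeriv_comp_add_const k f c) x
  rwa [show (fun z => f (z + c)) = f from funext h, eq_comm] at this

theorem norm_second_difference_le {E : Type*} [NormedAddCommGroup E] [NormedSpace ℝ E]
    {f f' f'' : ℝ → E} (hf : ∀ y, HasDerivAt f (f' y) y) (hf' : ∀ y, HasDerivAt f' (f'' y) y)
    {x a b C : ℝ} (hC : ∀ u, |u| ≤ |a| + |b| → ‖f'' (x + u)‖ ≤ C) :
    ‖f (x + a + b) - f (x + a) - f (x + b) + f x‖ ≤ C * |a| * |b| := by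
  have hinc : ∀ t ∈ Set.uIcc 0 b, ‖f' (x + a + t) - f' (x + t)‖ ≤ C * |a| := by
    intro t ht
    have ht : |t| ≤ |b| := by simpa using Set.abs_sub_left_of_mem_uIcc ht
    have bound : ∀ y ∈ Set.uIcc (x + t) (x + a + t), ‖f'' y‖ ≤ C := fun y hy => by
      have hy : |y - (x + t)| ≤ |a| := by
        simpa [add_right_comm] using Set.abs_sub_left_of_mem_uIcc hy
      simpa using hC (y - x) (by
        calc |y - x| = |(y - (x + t)) + t| := by ring_nf
          _ ≤ |a| + |b| := (abs_add_le _ _).trans (add_le_add hy ht))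
    simpa [Real.norm_eq_abs, add_right_comm] using
      (convex_uIcc _ _).norm_image_sub_le_of_norm_hasDerivWithin_le
        (fun y _ => (hf' y).hasDerivWithinAt) bound Set.left_mem_uIcc Set.right_mem_uIcc
  have hg : ∀ t, HasDerivAt (fun t => f (x + a + t) - f (x + t))
      (f' (x + a + t) - f' (x + t)) t :=
    fun t => ((hf _).comp_const_add _ t).sub ((hf _).comp_const_add _ t)
  calc ‖f (x + a + b) - f (x + a) - f (x + b) + f x‖
      = ‖(f (x + a + b) - f (x + b)) - (f (x + a + 0) - f (x + 0))‖ := by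
        congr 1; simp only [add_zero]; abel
    _ ≤ C * |a| * ‖b - 0‖ :=
        (convex_uIcc 0 b).norm_image_sub_le_of_norm_hasDerivWithin_le
          (fun t _ => (hg t).hasDerivWithinAt) hinc Set.left_mem_uIcc Set.right_mem_uIcc
    _ = C * |a| * |b| := by rw [sub_zero, Real.norm_eq_abs]

theorem wrapDist_eq_abs_sub_round (s t : ℝ) : wrapDist s t = |s - t - round (s - t)| := by
  refine le_antisymm ?_ (le_ciInf fun j => ?_)
  · have hbdd : BddBelow (Set.range fun j : ℤ => |s - t + j|) :=
      ⟨0, by rintro _ ⟨j, rfl⟩; positivity⟩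
    simpa [wrapDist, sub_eq_add_neg] using ciInf_le hbdd (-round (s - t))
  · simpa [sub_eq_add_neg] using round_le (s - t) (-j)

theorem bddAbove_range_comp_add_of_abs_le {g : ℝ → ℝ} (hg : Continuous g) (x r : ℝ) :
    BddAbove (Set.range fun ε : {e : ℝ // |e| ≤ r} => g (x + ε.1)) := by
  have h := (isCompact_Icc (a := -r) (b := r)).bddAbove_image
    (hg.comp (continuous_const_add x)).continuousOn
  rwa [Set.image_eq_range, show Set.Icc (-r) r = {e : ℝ | |e| ≤ r} by ext; simp [abs_le]] at h

theorem dirichletKer_periodic (n : ℕ) : Function.Periodic (dirichletKer n) 1 := fun t => by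
  unfold dirichletKer
  congr 1
  refine Finset.sum_congr rfl fun k _ => ?_
  have h : (-(2 * (Real.pi : ℂ) * Complex.I * (k : ℂ) * ((t + 1 : ℝ) : ℂ))) =
      -(2 * (Real.pi : ℂ) * Complex.I * (k : ℂ) * (t : ℂ)) +
        ((-k : ℤ) : ℂ) * (2 * (Real.pi : ℂ) * Complex.I) := by
    push_cast; ring
  rw [h, Complex.exp_add, Complex.exp_int_mul_two_pi_mul_I, mul_one]

theorem contDiff_dirichletKer (n : ℕ) : ContDiff ℝ ⊤ (dirichletKer n) :=
  contDiff_const.mul <| ContDiff.sum fun _ _ =>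
    Complex.contDiff_exp.comp (contDiff_const.mul Complex.ofRealCLM.contDiff).neg

theorem hasDerivAt_iteratedDeriv_dirichletKer (n p : ℕ) (t : ℝ) :
    HasDerivAt (iteratedDeriv p (dirichletKer n))
      (iteratedDeriv (p + 1) (dirichletKer n) t) t := by
  rw [iteratedDeriv_succ]
  exact ((contDiff_dirichletKer n).differentiable_iteratedDeriv p (by simp) t).hasDerivAt

theorem iteratedDeriv_dirichletKer_add_int (n p : ℕ) (y : ℝ) (k : ℤ) :
    iteratedDeriv p (dirichletKer n) (y + k) = iteratedDeriv p (dirichletKer n) y := by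
  simpa using ((dirichletKer_periodic n).iteratedDeriv p).int_mul k y

theorem Gmat_entry_bound_general (n L : ℕ) (p : ℕ)
    (τ τ' : Fin L → ℝ) (δ : ℝ)
    (hclose : ∀ ℓ : Fin L, wrapDist (τ ℓ) (τ' ℓ) ≤ δ) (i j : Fin L) :
    ‖Gmat n p τ τ' i j‖ ≤
      4 * δ ^ 2 *
        ⨆ ε : {e : ℝ // |e| ≤ 2 * δ},
          ‖iteratedDeriv (p + 2) (dirichletKer n) (τ i - τ j + ε.1)‖ := by
  set F := fun k => iteratedDeriv k (dirichletKer n)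
  set S := ⨆ ε : {e : ℝ // |e| ≤ 2 * δ}, ‖F (p + 2) (τ i - τ j + ε.1)‖
  set ri := round (τ i - τ' i)
  set rj := round (τ j - τ' j)
  set a := -(τ i - τ' i - ri)
  set b := τ j - τ' j - rj
  have ha : |a| ≤ δ := by rw [abs_neg, ← wrapDist_eq_abs_sub_round]; exact hclose i
  have hb : |b| ≤ δ := by rw [← wrapDist_eq_abs_sub_round]; exact hclose j
  have hδ : 0 ≤ δ := (abs_nonneg b).trans hb
  have hentry : Gmat n p τ τ' i j = F p (τ i - τ j + a + b) - F p (τ i - τ j + a)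
      - F p (τ i - τ j + b) + F p (τ i - τ j) := by
    rw [show τ i - τ j + a + b = τ' i - τ' j + (ri - rj : ℤ) by push_cast; ring,
      show τ i - τ j + a = τ' i - τ j + ri by ring,
      show τ i - τ j + b = τ i - τ' j + (-rj : ℤ) by push_cast; ring]
    simp only [F, iteratedDeriv_dirichletKer_add_int, Gmat, Matrix.of_apply]
    ring
  have hS : ∀ u, |u| ≤ |a| + |b| → ‖F (p + 2) (τ i - τ j + u)‖ ≤ S := fun u hu =>
    le_ciSup (bddAbove_range_comp_add_of_abs_le (g := fun y => ‖F (p + 2) y‖)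
      ((contDiff_dirichletKer n).continuous_iteratedDeriv _ (by simp)).norm _ _)
      ⟨u, by linarith⟩
  have hS0 : 0 ≤ S := Real.iSup_nonneg fun _ => norm_nonneg _
  calc ‖Gmat n p τ τ' i j‖ ≤ S * |a| * |b| := by
        rw [hentry]
        exact norm_second_difference_le (hasDerivAt_iteratedDeriv_dirichletKer n p)
          (hasDerivAt_iteratedDeriv_dirichletKer n (p + 1)) hS
    _ ≤ S * (δ * δ) := by
        rw [mul_assoc]
        exact mul_le_mul_of_nonneg_left (mul_le_mul ha hb (abs_nonneg b) hδ) hS0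
    _ ≤ 4 * δ ^ 2 * S := by nlinarith [mul_nonneg hS0 (sq_nonneg δ)]

/-- if the wrap-around distance between `τ_ℓ` and `τ̃_ℓ` is at most `δ` for each
`ℓ`, then for `p ∈ {0,1,2}` the entries of `G_p` satisfy
`|G_p(i,j)| ≤ 4δ² sup_{|ε| ≤ 2δ} |D_N^{(p+2)}(τ_i − τ_j + ε)|`. -/
theorem Gmat_entry_bound (n L : ℕ) (p : ℕ) (hp : p ∈ ({0, 1, 2} : Set ℕ))
    (τ τ' : Fin L → ℝ) (δ : ℝ) (hδ : 0 ≤ δ)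
    (hclose : ∀ ℓ : Fin L, wrapDist (τ ℓ) (τ' ℓ) ≤ δ) (i j : Fin L) :
    ‖Gmat n p τ τ' i j‖ ≤
      4 * δ ^ 2 *
        ⨆ ε : {e : ℝ // |e| ≤ 2 * δ},
          ‖iteratedDeriv (p + 2) (dirichletKer n) (τ i - τ j + ε.1)‖ :=
  Gmat_entry_bound_general n L p τ τ' δ hclose i j
end
end

section
/- Let E = V_1(τ) − V_1(τ̃) and let P be the orthogonal projection matrix onto the orthogonal complement of the column space of V_1(τ). If the wrap-around distance between τ_ℓ and τ̃_ℓ is at most δ for every ℓ, then the largest eigenvalue of the Hermitian positive semidefinite matrix M = E^H P E satisfies λ_max(M) ≤ max_i Σ_j |G_2(i,j)| ≤ 4δ² L sup_{|ε| ≤ 2δ} sup_{i,j} |D_N^{(4)}(τ_i − τ_j + ε)|. -/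
open scoped Real BigOperators
open Matrix

noncomputable section

open scoped ComplexOrder

/-!
Writing `E = V₁(τ) - V₁(τ̃)`, the Gram matrix `EᴴE` is `-G₂`, because the inner product of
`v₁(s)` and `v₁(t)` is `-D_N''(s - t)`. As `P` is an orthogonal projection,
`xᴴEᴴPEx ≤ xᴴEᴴEx`, and a Schur test bounds the quadratic form of the Hermitian matrix `EᴴE` by
its largest absolute row sum; evaluating at unit eigenvectors bounds `λ_max(EᴴPE)`.
Each entry of `G₂` is a mixed second difference of the `1`-periodic function `D_N''` with steps
`τ_ℓ - τ̃_ℓ` reduced modulo `1`, hence of size at most `δ`, so two applications of the mean value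
theorem bound it by `δ²` times the supremum of `|D_N⁽⁴⁾|` over a `2δ`-neighbourhood.
-/

section QuadraticForm

variable {𝕜 m ι : Type*} [RCLike 𝕜] [Fintype m] [Fintype ι]

theorem IsStarProjection.posSemidef {P : Matrix m m 𝕜} (hP : IsStarProjection P) :
    P.PosSemidef := by
  have hP' : Pᴴ * P = P := by
    rw [← star_eq_conjTranspose, hP.isSelfAdjoint.star_eq, hP.isIdempotentElem.eq]
  exact hP' ▸ posSemidef_conjTranspose_mul_self P

theorem IsStarProjection.re_dotProduct_conjTranspose_mul_mul_mulVec_le [DecidableEq m]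
    {P : Matrix m m 𝕜} (hP : IsStarProjection P) (E : Matrix m ι 𝕜) (x : ι → 𝕜) :
    RCLike.re (star x ⬝ᵥ (Eᴴ * P * E) *ᵥ x) ≤ RCLike.re (star x ⬝ᵥ (Eᴴ * E) *ᵥ x) := by
  have hsplit : Eᴴ * E = Eᴴ * P * E + Eᴴ * (1 - P) * E := by
    simp [Matrix.mul_sub, Matrix.sub_mul]
  have hnonneg := (hP.one_sub.posSemidef.conjTranspose_mul_mul_same E).dotProduct_mulVec_nonneg x
  rw [hsplit, add_mulVec, dotProduct_add, map_add, le_add_iff_nonneg_right]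
  exact (RCLike.nonneg_iff.1 hnonneg).1

theorem Matrix.IsHermitian.re_dotProduct_mulVec_le_of_sum_norm_le {A : Matrix ι ι 𝕜}
    (hA : A.IsHermitian) {R : ℝ} (hR : ∀ i, ∑ j, ‖A i j‖ ≤ R) (x : ι → 𝕜) :
    RCLike.re (star x ⬝ᵥ A *ᵥ x) ≤ R * ∑ i, ‖x i‖ ^ 2 := by
  have hsymm : ∑ i, ∑ j, ‖A i j‖ * ‖x j‖ ^ 2 = ∑ i, ∑ j, ‖A i j‖ * ‖x i‖ ^ 2 := by
    rw [Finset.sum_comm]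
    refine Finset.sum_congr rfl fun i _ => Finset.sum_congr rfl fun j _ => ?_
    rw [← hA.apply i j, norm_star]
  calc RCLike.re (star x ⬝ᵥ A *ᵥ x)
      ≤ ‖star x ⬝ᵥ A *ᵥ x‖ := RCLike.re_le_norm _
    _ ≤ ∑ i, ∑ j, ‖A i j‖ * (‖x i‖ * ‖x j‖) := by
      simp only [dotProduct, mulVec, Finset.mul_sum]
      refine (norm_sum_le _ _).trans (Finset.sum_le_sum fun i _ => ?_)
      refine (norm_sum_le _ _).trans (Finset.sum_le_sum fun j _ => ?_)
      simp only [norm_mul, Pi.star_apply, norm_star]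
      rw [mul_left_comm]
    _ ≤ ∑ i, ∑ j, ‖A i j‖ * ((‖x i‖ ^ 2 + ‖x j‖ ^ 2) / 2) := by
      gcongr
      nlinarith [sq_nonneg (‖x i‖ - ‖x j‖)]
    _ = ∑ i, (∑ j, ‖A i j‖) * ‖x i‖ ^ 2 := by
      simp only [mul_div_assoc', mul_add, add_div, Finset.sum_add_distrib, ← Finset.sum_div, hsymm,
        Finset.sum_mul]
      ring
    _ ≤ R * ∑ i, ‖x i‖ ^ 2 := by
      rw [Finset.mul_sum]
      gcongr with i
      exact hR i

theorem Matrix.IsHermitian.eigenvalues_le_of_re_dotProduct_mulVec_le [DecidableEq ι]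
    {M : Matrix ι ι 𝕜} (hM : M.IsHermitian) {R : ℝ}
    (hR : ∀ x, RCLike.re (star x ⬝ᵥ M *ᵥ x) ≤ R * ∑ i, ‖x i‖ ^ 2) (i : ι) :
    hM.eigenvalues i ≤ R := by
  rw [hM.eigenvalues_eq]
  refine (hR _).trans_eq ?_
  rw [← EuclideanSpace.norm_sq_eq, hM.eigenvectorBasis.orthonormal.1 i, one_pow, mul_one]

end QuadraticForm

theorem norm_mixed_difference_le {E : Type*} [NormedAddCommGroup E] [NormedSpace ℝ E]
    {f f' f'' : ℝ → E} {K x h g : ℝ}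
    (hf : ∀ y, HasDerivAt f (f' y) y) (hf' : ∀ y, HasDerivAt f' (f'' y) y)
    (hK : ∀ y, |y - x| ≤ |h| + |g| → ‖f'' y‖ ≤ K) :
    ‖f x - f (x - h) + f (x - h + g) - f (x + g)‖ ≤ K * |g| * |h| := by
  have hball {r y : ℝ} : y ∈ Metric.closedBall x r ↔ |y - x| ≤ r := by
    rw [Metric.mem_closedBall, Real.dist_eq]
  have hstep : ∀ y ∈ Metric.closedBall x |h|, ‖f' y - f' (y + g)‖ ≤ K * |g| := by
    intro y hy
    rw [hball] at hy
    have := (convex_closedBall x (|h| + |g|)).norm_image_sub_le_of_norm_hasDerivWithin_le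
      (fun z _ => (hf' z).hasDerivWithinAt) (fun z hz => hK z (hball.1 hz))
      (hball.2 (by linarith [abs_nonneg g]))
      (hball.2 (by rw [add_sub_right_comm]; exact (abs_add_le _ _).trans (by linarith)))
    rwa [norm_sub_rev, add_sub_cancel_left, Real.norm_eq_abs] at this
  have := (convex_closedBall x |h|).norm_image_sub_le_of_norm_hasDerivWithin_le
    (f := fun y => f y - f (y + g))
    (fun z _ => ((hf z).sub ((hf (z + g)).comp_add_const z g)).hasDerivWithinAt) hstep
    (x := x - h) (hball.2 (by rw [sub_sub_cancel_left, abs_neg]))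
    (Metric.mem_closedBall_self (abs_nonneg h))
  rw [sub_sub_cancel, Real.norm_eq_abs] at this
  convert this using 2
  abel

theorem abs_sub_round_le_wrapDist (s t : ℝ) : |s - t - round (s - t)| ≤ wrapDist s t :=
  le_ciInf fun j => by simpa using round_le (s - t) (-j)

theorem sum_fin_two_mul_add_one_eq_sum_Icc {M : Type*} [AddCommMonoid M] (n : ℕ) (g : ℤ → M) :
    ∑ m : Fin (2 * n + 1), g ((m : ℤ) - n) = ∑ k ∈ Finset.Icc (-(n : ℤ)) n, g k := by
  refine Finset.sum_bij' (fun m _ => (m : ℤ) - n)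
    (fun k hk => ⟨(k + n).toNat, by rw [Finset.mem_Icc] at hk; omega⟩) ?_ ?_ ?_ ?_ ?_ <;>
    simp +contextual <;> omega

section DirichletKernel

open Complex

def dirichletKerDeriv (n p : ℕ) (t : ℝ) : ℂ :=
  (1 / (2 * (n : ℂ) + 1)) * ∑ k ∈ Finset.Icc (-(n : ℤ)) (n : ℤ),
    (-(2 * (π : ℂ) * I * k)) ^ p * exp (-(2 * (π : ℂ) * I * k) * t)

theorem hasDerivAt_dirichletKerDeriv (n p : ℕ) (t : ℝ) :
    HasDerivAt (dirichletKerDeriv n p) (dirichletKerDeriv n (p + 1) t) t := by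
  unfold dirichletKerDeriv
  refine (HasDerivAt.fun_sum fun k _ => ?_).const_mul _
  set c : ℂ := -(2 * (π : ℂ) * I * k)
  have h : HasDerivAt (fun s : ℝ => c * s) c t := by
    simpa using (hasDerivAt_id (t : ℂ)).comp_ofReal.const_mul c
  exact (h.cexp.const_mul (c ^ p)).congr_deriv (by ring)

theorem iteratedDeriv_dirichletKer_s13 (n p : ℕ) :
    iteratedDeriv p (dirichletKer n) = dirichletKerDeriv n p := by
  induction p with
  | zero => ext t; simp [dirichletKer, dirichletKerDeriv, neg_mul]
  | succ p ih =>
    ext t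
    rw [iteratedDeriv_succ, ih, (hasDerivAt_dirichletKerDeriv n p t).deriv]

theorem dirichletKerDeriv_periodic (n p : ℕ) : Function.Periodic (dirichletKerDeriv n p) 1 := by
  intro t
  unfold dirichletKerDeriv
  congr 1
  refine Finset.sum_congr rfl fun k _ => ?_
  have : -(2 * (π : ℂ) * I * k) * ((t + 1 : ℝ) : ℂ) =
      -(2 * (π : ℂ) * I * k) * t + (-k : ℤ) * (2 * π * I) := by
    push_cast; ring
  rw [this, exp_add, exp_int_mul_two_pi_mul_I, mul_one]

theorem bddAbove_range_norm_iteratedDeriv_dirichletKer (n p : ℕ) :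
    BddAbove (Set.range fun t => ‖iteratedDeriv p (dirichletKer n) t‖) := by
  have hcont : Continuous (dirichletKerDeriv n p) :=
    continuous_iff_continuousAt.2 fun t => (hasDerivAt_dirichletKerDeriv n p t).continuousAt
  obtain ⟨C, hC⟩ :=
    ((dirichletKerDeriv_periodic n p).isBounded_of_continuous one_ne_zero hcont).exists_norm_le
  rw [iteratedDeriv_dirichletKer_s13]
  exact ⟨C, by rintro _ ⟨t, rfl⟩; exact hC _ ⟨t, rfl⟩⟩

theorem sum_star_v1_mul_v1 (n : ℕ) (s t : ℝ) :
    ∑ m, star (v1 n s m) * v1 n t m = -dirichletKerDeriv n 2 (s - t) := by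
  have hN : ((1 / √(2 * n + 1) : ℝ) : ℂ) * ((1 / √(2 * n + 1) : ℝ) : ℂ) = 1 / (2 * n + 1) := by
    rw [← ofReal_mul, div_mul_div_comm, one_mul, Real.mul_self_sqrt (by positivity)]
    push_cast; ring
  unfold dirichletKerDeriv
  rw [← sum_fin_two_mul_add_one_eq_sum_Icc, Finset.mul_sum, ← Finset.sum_neg_distrib]
  refine Finset.sum_congr rfl fun m _ => ?_
  simp only [v1, star_def, map_mul, ← Complex.exp_conj, conj_ofReal, conj_I, map_ofNat,
    map_intCast]
  set k : ℂ := (((m : ℤ) - n : ℤ) : ℂ)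
  have hexp : -(2 * π * I * k) * ((s - t : ℝ) : ℂ) = 2 * π * -I * k * s + 2 * π * I * k * t := by
    push_cast; ring
  rw [← hN, hexp, exp_add]
  ring

end DirichletKernel

theorem conjTranspose_mul_self_V1mat_sub_apply (n : ℕ) {L : ℕ} (τ τ' : Fin L → ℝ) (i j : Fin L) :
    ((V1mat n τ - V1mat n τ')ᴴ * (V1mat n τ - V1mat n τ')) i j = -Gmat n 2 τ τ' i j := by
  simp only [mul_apply, conjTranspose_apply, Matrix.sub_apply, V1mat, of_apply, star_sub, sub_mul,
    mul_sub, Finset.sum_sub_distrib, sum_star_v1_mul_v1, Gmat, iteratedDeriv_dirichletKer_s13]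
  ring

theorem norm_Gmat_apply_le (n p : ℕ) {L : ℕ} {τ τ' : Fin L → ℝ} {δ K : ℝ} {i j : Fin L}
    (hi : wrapDist (τ i) (τ' i) ≤ δ) (hj : wrapDist (τ j) (τ' j) ≤ δ)
    (hK : ∀ ε, |ε| ≤ 2 * δ → ‖iteratedDeriv (p + 2) (dirichletKer n) (τ i - τ j + ε)‖ ≤ K) :
    ‖Gmat n p τ τ' i j‖ ≤ δ ^ 2 * K := by
  set x := τ i - τ j
  set ri := round (τ i - τ' i)
  set rj := round (τ j - τ' j)
  set ei := τ i - τ' i - ri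
  set ej := τ j - τ' j - rj
  have hhi : |ei| ≤ δ := (abs_sub_round_le_wrapDist _ _).trans hi
  have hhj : |ej| ≤ δ := (abs_sub_round_le_wrapDist _ _).trans hj
  have hδ : 0 ≤ δ := (abs_nonneg _).trans hhi
  have hper := dirichletKerDeriv_periodic n p
  have hG : Gmat n p τ τ' i j = dirichletKerDeriv n p x - dirichletKerDeriv n p (x - ei) +
      dirichletKerDeriv n p (x - ei + ej) - dirichletKerDeriv n p (x + ej) := by
    simp only [Gmat, of_apply, iteratedDeriv_dirichletKer_s13]
    rw [show τ' i - τ j = x - ei - (ri : ℤ) * 1 by simp [x, ei]; ring,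
      show τ' i - τ' j = x - ei + ej - ((ri - rj : ℤ) : ℝ) * 1 by push_cast [x, ei, ej]; ring,
      show τ i - τ' j = x + ej - ((-rj : ℤ) : ℝ) * 1 by push_cast [x, ej]; ring,
      hper.sub_int_mul_eq, hper.sub_int_mul_eq, hper.sub_int_mul_eq]
  have hK' : ∀ y, |y - x| ≤ |ei| + |ej| → ‖dirichletKerDeriv n (p + 2) y‖ ≤ K := fun y hy => by
    simpa [iteratedDeriv_dirichletKer_s13] using hK (y - x) (by linarith)
  have hK0 : 0 ≤ K := (norm_nonneg _).trans (hK' x (by rw [sub_self, abs_zero]; positivity))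
  calc ‖Gmat n p τ τ' i j‖ ≤ K * |ej| * |ei| := by
        rw [hG]
        exact norm_mixed_difference_le (hasDerivAt_dirichletKerDeriv n p)
          (hasDerivAt_dirichletKerDeriv n (p + 1)) hK'
    _ ≤ K * δ * δ := by gcongr
    _ = δ ^ 2 * K := by ring

theorem projected_error_gram_lambda_max_bound_general (n L : ℕ) (τ τ' : Fin L → ℝ)
    (δ : ℝ) (hclose : ∀ ℓ : Fin L, wrapDist (τ ℓ) (τ' ℓ) ≤ δ)
    (P : Matrix (Fin (2 * n + 1)) (Fin (2 * n + 1)) ℂ)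
    (hPH : Pᴴ = P) (hPP : P * P = P) :
    ((V1mat n τ - V1mat n τ')ᴴ * P * (V1mat n τ - V1mat n τ')).PosSemidef ∧
      ∀ hM : ((V1mat n τ - V1mat n τ')ᴴ * P * (V1mat n τ - V1mat n τ')).IsHermitian,
        (⨆ i, hM.eigenvalues i) ≤
            (⨆ i : Fin L, ∑ j : Fin L, ‖Gmat n 2 τ τ' i j‖) ∧
          (⨆ i : Fin L, ∑ j : Fin L, ‖Gmat n 2 τ τ' i j‖) ≤
            4 * δ ^ 2 * L *
              ⨆ q : {e : ℝ // |e| ≤ 2 * δ} × Fin L × Fin L,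
                ‖iteratedDeriv 4 (dirichletKer n) (τ q.2.1 - τ q.2.2 + q.1.1)‖ := by
  set E := V1mat n τ - V1mat n τ'
  have hP : IsStarProjection P := ⟨hPP, hPH⟩
  refine ⟨hP.posSemidef.conjTranspose_mul_mul_same E, fun hM => ⟨?_, ?_⟩⟩
  · have hrow (i : Fin L) : ∑ j, ‖(Eᴴ * E) i j‖ ≤ ⨆ i, ∑ j, ‖Gmat n 2 τ τ' i j‖ := by
      simpa only [E, conjTranspose_mul_self_V1mat_sub_apply, norm_neg] using
        le_ciSup (Set.finite_range fun i => ∑ j, ‖Gmat n 2 τ τ' i j‖).bddAbove i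
    refine Real.iSup_le (fun i => hM.eigenvalues_le_of_re_dotProduct_mulVec_le (fun x => ?_) i)
      (Real.iSup_nonneg fun i => by positivity)
    exact (hP.re_dotProduct_conjTranspose_mul_mul_mulVec_le E x).trans
      ((isHermitian_conjTranspose_mul_self E).re_dotProduct_mulVec_le_of_sum_norm_le hrow x)
  · set S := ⨆ q : {e : ℝ // |e| ≤ 2 * δ} × Fin L × Fin L,
      ‖iteratedDeriv 4 (dirichletKer n) (τ q.2.1 - τ q.2.2 + q.1.1)‖
    have hbdd : BddAbove (Set.range fun q : {e : ℝ // |e| ≤ 2 * δ} × Fin L × Fin L =>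
        ‖iteratedDeriv 4 (dirichletKer n) (τ q.2.1 - τ q.2.2 + q.1.1)‖) :=
      (bddAbove_range_norm_iteratedDeriv_dirichletKer n 4).mono
        (by rintro _ ⟨q, rfl⟩; exact ⟨_, rfl⟩)
    have hS (i j : Fin L) (ε : ℝ) (hε : |ε| ≤ 2 * δ) :
        ‖iteratedDeriv 4 (dirichletKer n) (τ i - τ j + ε)‖ ≤ S :=
      le_ciSup hbdd ⟨⟨ε, hε⟩, i, j⟩
    have hS0 : 0 ≤ S := Real.iSup_nonneg fun _ => norm_nonneg _
    refine Real.iSup_le (fun i => ?_) (by positivity)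
    calc ∑ j, ‖Gmat n 2 τ τ' i j‖ ≤ ∑ j : Fin L, δ ^ 2 * S :=
          Finset.sum_le_sum fun j _ => norm_Gmat_apply_le n 2 (hclose i) (hclose j) (hS i j)
      _ = L * (δ ^ 2 * S) := by simp
      _ ≤ 4 * δ ^ 2 * L * S := by linarith [show 0 ≤ L * (δ ^ 2 * S) by positivity]

/-- with `E = V₁(τ) − V₁(τ̃)` and `P` the orthogonal projection onto the
orthogonal complement of the column space of `V₁(τ)`, if the wrap-around distance between
`τ_ℓ` and `τ̃_ℓ` is at most `δ` for every `ℓ`, then the Hermitian PSD matrix `M = EᴴPE`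
satisfies `λ_max(M) ≤ max_i ∑_j |G₂(i,j)| ≤ 4δ²L sup_{|ε|≤2δ} sup_{i,j} |D_N⁽⁴⁾(τ_i−τ_j+ε)|`. -/
theorem projected_error_gram_lambda_max_bound (n L : ℕ) (τ τ' : Fin L → ℝ)
    (δ : ℝ) (hδ : 0 ≤ δ) (hclose : ∀ ℓ : Fin L, wrapDist (τ ℓ) (τ' ℓ) ≤ δ)
    (P : Matrix (Fin (2 * n + 1)) (Fin (2 * n + 1)) ℂ)
    (hPH : Pᴴ = P) (hPP : P * P = P) (hPV : P * V1mat n τ = 0)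
    (hPfix : ∀ y : Fin (2 * n + 1) → ℂ, (V1mat n τ)ᴴ *ᵥ y = 0 → P *ᵥ y = y) :
    ((V1mat n τ - V1mat n τ')ᴴ * P * (V1mat n τ - V1mat n τ')).PosSemidef ∧
      ∀ hM : ((V1mat n τ - V1mat n τ')ᴴ * P * (V1mat n τ - V1mat n τ')).IsHermitian,
        (⨆ i, hM.eigenvalues i) ≤
            (⨆ i : Fin L, ∑ j : Fin L, ‖Gmat n 2 τ τ' i j‖) ∧
          (⨆ i : Fin L, ∑ j : Fin L, ‖Gmat n 2 τ τ' i j‖) ≤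
            4 * δ ^ 2 * L *
              ⨆ q : {e : ℝ // |e| ≤ 2 * δ} × Fin L × Fin L,
                ‖iteratedDeriv 4 (dirichletKer n) (τ q.2.1 - τ q.2.2 + q.1.1)‖ :=
  projected_error_gram_lambda_max_bound_general n L τ τ' δ hclose P hPH hPP
end
end
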